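/- Let Γ = (G,I,O,λ) be a labelled open graph, S ⊆ V, and let Γ' be the YZ-insertion of a fresh vertex z with neighbourhood S into Γ. If Γ' has a Pauli flow, then Γ has a Pauli flow (i.e. deleting a YZ-measured vertex always preserves the existence of Pauli flow). -/

import Mathlib

open scoped Classical
noncomputable section

inductive MLabel : Type
  | X | Y | Z | XY | XZ | YZ
  deriving DecidableEq

variable {V : Type*}

/-- The odd neighbourhood of a set `A`: vertices with an odd number of neighbours in `A`. -/
def oddN (G : SimpleGraph V) (A : Set V) : Set V :=
  {v | Odd ((A ∩ G.neighborSet v).ncard)}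

/-- The closed odd neighbourhood of a set `A`. -/
def cOddN (G : SimpleGraph V) (A : Set V) : Set V :=
  symmDiff (oddN G A) A

/-- A Pauli flow on the labelled open graph `(G, I, O, lab)`. -/
structure IsPauliFlow (G : SimpleGraph V) (I O : Set V) (lab : V → MLabel)
    (c : V → Set V) (prec : V → V → Prop) : Prop where
  corr_sub : ∀ u, u ∉ O → c u ⊆ Iᶜ
  irrefl : ∀ u, ¬ prec u u
  trans : ∀ ⦃a b d⦄, prec a b → prec b d → prec a d
  p1 : ∀ u, u ∉ O → ∀ v ∈ c u, v ∉ O → u ≠ v →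
    lab v ∉ ({MLabel.X, MLabel.Y} : Set MLabel) → prec u v
  p2 : ∀ u, u ∉ O → ∀ v ∈ oddN G (c u), v ∉ O → u ≠ v →
    lab v ∉ ({MLabel.Y, MLabel.Z} : Set MLabel) → prec u v
  p3 : ∀ u, u ∉ O → ∀ v, v ∉ O → ¬ prec u v → u ≠ v → lab v = MLabel.Y →
    v ∉ cOddN G (c u)
  p4 : ∀ u, u ∉ O → lab u = MLabel.XY → u ∉ c u ∧ u ∈ oddN G (c u)
  p5 : ∀ u, u ∉ O → lab u = MLabel.XZ → u ∈ c u ∧ u ∈ oddN G (c u)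
  p6 : ∀ u, u ∉ O → lab u = MLabel.YZ → u ∈ c u ∧ u ∉ oddN G (c u)
  p7 : ∀ u, u ∉ O → lab u = MLabel.X → u ∈ oddN G (c u)
  p8 : ∀ u, u ∉ O → lab u = MLabel.Z → u ∈ c u
  p9 : ∀ u, u ∉ O → lab u = MLabel.Y → u ∈ cOddN G (c u)

/-- `A` is focused over `S`. -/
def FocusedOver (G : SimpleGraph V) (lab : V → MLabel) (A S : Set V) : Prop :=
  (∀ w ∈ S ∩ A, lab w ∈ ({MLabel.XY, MLabel.X, MLabel.Y} : Set MLabel)) ∧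
  (∀ w ∈ S ∩ oddN G A, lab w ∈ ({MLabel.XZ, MLabel.YZ, MLabel.Y, MLabel.Z} : Set MLabel)) ∧
  (∀ w ∈ S, lab w = MLabel.Y → w ∉ cOddN G A)

/-- A focused Pauli flow. -/
def IsFocusedPauliFlow (G : SimpleGraph V) (I O : Set V) (lab : V → MLabel)
    (c : V → Set V) (prec : V → V → Prop) : Prop :=
  IsPauliFlow G I O lab c prec ∧ ∀ v, v ∉ O → FocusedOver G lab (c v) (Oᶜ \ {v})

def HasPauliFlow (G : SimpleGraph V) (I O : Set V) (lab : V → MLabel) : Prop :=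
  ∃ c prec, IsPauliFlow G I O lab c prec

/-- The graph that results from inserting a fresh vertex (`none`) with
neighbourhood `S` into `G`. -/
def insertGraph (G : SimpleGraph V) (S : Set V) : SimpleGraph (Option V) where
  Adj a b := match a, b with
    | some x, some y => G.Adj x y
    | some x, none => x ∈ S
    | none, some y => y ∈ S
    | none, none => False
  symm := ⟨by
    rintro (_ | x) (_ | y) h
    · exact h
    · exact h
    · exact h
    · exact G.adj_symm h⟩
  loopless := ⟨by
    rintro (_ | x) h
    · exact h
    · exact G.ne_of_adj h rfl⟩

/-- The measurement labelling after inserting a fresh vertex measured `ℓ`. -/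
def insertLab (lab : V → MLabel) (ℓ : MLabel) : Option V → MLabel
  | none => ℓ
  | some v => lab v

/-- The set 𝒳 of X-like internal vertices. -/
def mX (I O : Set V) (lab : V → MLabel) : Set V :=
  {v | v ∉ I ∧ v ∉ O ∧ lab v ∈ ({MLabel.XY, MLabel.X, MLabel.Y} : Set MLabel)}

/-- The set ℒ of planar-measured internal vertices. -/
def mL (I O : Set V) (lab : V → MLabel) : Set V :=
  {v | v ∉ I ∧ v ∉ O ∧ lab v ∈ ({MLabel.XY, MLabel.XZ, MLabel.YZ} : Set MLabel)}

section AuxYZ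

lemma aux_odd_ncard_symmDiff {α : Type*} {s t : Set α} (hs : s.Finite) (ht : t.Finite) :
    Odd (symmDiff s t).ncard ↔ (Odd s.ncard ↔ ¬ Odd t.ncard) := by
  have h1 : (s ∩ t).ncard + (s \ t).ncard = s.ncard :=
    Set.ncard_inter_add_ncard_diff_eq_ncard s t hs
  have h2 : (t ∩ s).ncard + (t \ s).ncard = t.ncard :=
    Set.ncard_inter_add_ncard_diff_eq_ncard t s ht
  have h0 : (t ∩ s).ncard = (s ∩ t).ncard := by rw [Set.inter_comm]
  have h3 : (symmDiff s t).ncard = (s \ t).ncard + (t \ s).ncard := by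
    rw [Set.symmDiff_def, Set.ncard_union_eq disjoint_sdiff_sdiff hs.diff ht.diff]
  simp only [Nat.odd_iff] at *
  omega

lemma aux_inter_symmDiff_right {α : Type*} (A B N : Set α) :
    symmDiff A B ∩ N = symmDiff (A ∩ N) (B ∩ N) := by
  ext w; simp only [Set.mem_inter_iff, Set.mem_symmDiff]; tauto

lemma aux_mem_oddN_symmDiff {α : Type*} [Fintype α] (G : SimpleGraph α) (A B : Set α) (v : α) :
    v ∈ oddN G (symmDiff A B) ↔ (v ∈ oddN G A ↔ v ∉ oddN G B) := by
  simp only [oddN, Set.mem_setOf_eq]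
  rw [aux_inter_symmDiff_right, aux_odd_ncard_symmDiff (Set.toFinite _) (Set.toFinite _)]

lemma aux_mem_cOddN_symmDiff {α : Type*} [Fintype α] (G : SimpleGraph α) (A B : Set α) (v : α) :
    v ∈ cOddN G (symmDiff A B) ↔ (v ∈ cOddN G A ↔ v ∉ cOddN G B) := by
  simp only [cOddN, Set.mem_symmDiff, aux_mem_oddN_symmDiff]
  tauto

lemma aux_insert_inter_neighborSet (G : SimpleGraph V) (S : Set V)
    (A : Set (Option V)) (v : V) (h : (none : Option V) ∉ A) :
    A ∩ (insertGraph G S).neighborSet (some v) = some '' (some ⁻¹' A ∩ G.neighborSet v) := by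
  ext w
  cases w with
  | none => simp [h]
  | some y =>
    simp only [Set.mem_inter_iff, SimpleGraph.mem_neighborSet, Set.mem_image,
      Set.mem_preimage, Option.some.injEq]
    constructor
    · rintro ⟨hA, hadj⟩; exact ⟨y, ⟨hA, hadj⟩, rfl⟩
    · rintro ⟨x, ⟨hA, hadj⟩, rfl⟩; exact ⟨hA, hadj⟩

lemma aux_mem_oddN_insert_some (G : SimpleGraph V) (S : Set V)
    (A : Set (Option V)) (v : V) (h : (none : Option V) ∉ A) :
    some v ∈ oddN (insertGraph G S) A ↔ v ∈ oddN G (some ⁻¹' A) := by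
  simp only [oddN, Set.mem_setOf_eq]
  rw [aux_insert_inter_neighborSet G S A v h,
    Set.ncard_image_of_injective _ (Option.some_injective V)]

end AuxYZ

/-- deleting a YZ-measured vertex preserves the existence of Pauli
flow; equivalently, if the YZ-insertion `Γ'` has a Pauli flow then so does `Γ`. -/
theorem yz_deletion_preserves_pauli_flow {V : Type*} [Fintype V]
    (G : SimpleGraph V) (I O : Set V) (lab : V → MLabel) (S : Set V)
    (h : HasPauliFlow (insertGraph G S) (some '' I) (some '' O)
      (insertLab lab MLabel.YZ)) :
    HasPauliFlow G I O lab := by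
  obtain ⟨c', prec', F⟩ := h
  have hzO : (none : Option V) ∉ some '' O := by
    rintro ⟨x, -, hx⟩; cases hx
  have hsO : ∀ u : V, u ∉ O → some u ∉ some '' O := by
    rintro u hu ⟨x, hx, hxe⟩
    obtain rfl := Option.some_injective V hxe
    exact hu hx
  have hzB : (none : Option V) ∈ c' none := (F.p6 none hzO rfl).1
  set D : V → Set (Option V) :=
    fun u => if (none : Option V) ∈ c' (some u) then symmDiff (c' (some u)) (c' none)
      else c' (some u) with hDdef
  have hDpos : ∀ u, (none : Option V) ∈ c' (some u) →
      D u = symmDiff (c' (some u)) (c' none) := fun u h => if_pos h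
  have hDneg : ∀ u, (none : Option V) ∉ c' (some u) → D u = c' (some u) :=
    fun u h => if_neg h
  have hnD : ∀ u, (none : Option V) ∉ D u := by
    intro u
    by_cases h : (none : Option V) ∈ c' (some u)
    · rw [hDpos u h]
      intro hm
      rcases Set.mem_symmDiff.mp hm with ⟨-, hb⟩ | ⟨-, ha⟩
      · exact hb hzB
      · exact ha h
    · rw [hDneg u h]; exact h
  have hprecz : ∀ u, u ∉ O → (none : Option V) ∈ c' (some u) → prec' (some u) none := by
    intro u hu hm
    exact F.p1 (some u) (hsO u hu) none hm hzO (by simp) (by simp [insertLab])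
  have hprecB : ∀ v : V, v ∉ O → lab v ∉ ({MLabel.X, MLabel.Y} : Set MLabel) →
      some v ∈ c' none → prec' none (some v) := by
    intro v hv hl hm
    exact F.p1 none hzO (some v) hm (hsO v hv) (by simp) hl
  have hprecOB : ∀ v : V, v ∉ O → lab v ∉ ({MLabel.Y, MLabel.Z} : Set MLabel) →
      some v ∈ oddN (insertGraph G S) (c' none) → prec' none (some v) := by
    intro v hv hl hm
    exact F.p2 none hzO (some v) hm (hsO v hv) (by simp) hl
  have hselfB : ∀ u, u ∉ O → (none : Option V) ∈ c' (some u) →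
      lab u ∉ ({MLabel.X, MLabel.Y} : Set MLabel) → some u ∉ c' none := by
    intro u hu h hl hm
    exact F.irrefl (some u) (F.trans (hprecz u hu h) (hprecB u hu hl hm))
  have hselfOB : ∀ u, u ∉ O → (none : Option V) ∈ c' (some u) →
      lab u ∉ ({MLabel.Y, MLabel.Z} : Set MLabel) →
      some u ∉ oddN (insertGraph G S) (c' none) := by
    intro u hu h hl hm
    exact F.irrefl (some u) (F.trans (hprecz u hu h) (hprecOB u hu hl hm))
  have hselfCB : ∀ u, u ∉ O → (none : Option V) ∈ c' (some u) → lab u = MLabel.Y →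
      some u ∉ cOddN (insertGraph G S) (c' none) := by
    intro u hu h hl
    refine F.p3 none hzO (some u) (hsO u hu) ?_ (by simp) hl
    intro hp
    exact F.irrefl (some u) (F.trans (hprecz u hu h) hp)
  have hodd : ∀ u v, v ∈ oddN G (some ⁻¹' (D u)) ↔
      some v ∈ oddN (insertGraph G S) (D u) :=
    fun u v => (aux_mem_oddN_insert_some G S (D u) v (hnD u)).symm
  have hcodd : ∀ u v, v ∈ cOddN G (some ⁻¹' (D u)) ↔
      some v ∈ cOddN (insertGraph G S) (D u) := by
    intro u v
    simp only [cOddN, Set.mem_symmDiff, Set.mem_preimage, hodd]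
  refine ⟨fun u => some ⁻¹' (D u), fun u v => prec' (some u) (some v), ?_⟩
  constructor
  case corr_sub =>
    intro u hu v hv
    simp only [Set.mem_preimage] at hv
    have hvc : some v ∈ (some '' I)ᶜ := by
      by_cases h : (none : Option V) ∈ c' (some u)
      · rw [hDpos u h] at hv
        rcases Set.mem_symmDiff.mp hv with ⟨ha, -⟩ | ⟨hb, -⟩
        · exact F.corr_sub (some u) (hsO u hu) ha
        · exact F.corr_sub none hzO hb
      · rw [hDneg u h] at hv
        exact F.corr_sub (some u) (hsO u hu) hv
    exact fun hvI => hvc ⟨v, hvI, rfl⟩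
  case irrefl => exact fun u => F.irrefl (some u)
  case trans => exact fun a b d hab hbd => F.trans hab hbd
  case p1 =>
    intro u hu v hv hvO huv hl
    simp only [Set.mem_preimage] at hv
    by_cases h : (none : Option V) ∈ c' (some u)
    · rw [hDpos u h] at hv
      rcases Set.mem_symmDiff.mp hv with ⟨ha, -⟩ | ⟨hb, -⟩
      · exact F.p1 (some u) (hsO u hu) (some v) ha (hsO v hvO) (by simpa using huv) hl
      · exact F.trans (hprecz u hu h) (hprecB v hvO hl hb)
    · rw [hDneg u h] at hv
      exact F.p1 (some u) (hsO u hu) (some v) hv (hsO v hvO) (by simpa using huv) hl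
  case p2 =>
    intro u hu v hv hvO huv hl
    rw [hodd u v] at hv
    by_cases h : (none : Option V) ∈ c' (some u)
    · rw [hDpos u h, aux_mem_oddN_symmDiff] at hv
      by_cases hb : some v ∈ oddN (insertGraph G S) (c' none)
      · exact F.trans (hprecz u hu h) (hprecOB v hvO hl hb)
      · exact F.p2 (some u) (hsO u hu) (some v) (hv.mpr hb) (hsO v hvO)
          (by simpa using huv) hl
    · rw [hDneg u h] at hv
      exact F.p2 (some u) (hsO u hu) (some v) hv (hsO v hvO) (by simpa using huv) hl
  case p3 =>
    intro u hu v hvO hnp huv hl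
    rw [hcodd u v]
    have hA : some v ∉ cOddN (insertGraph G S) (c' (some u)) :=
      F.p3 (some u) (hsO u hu) (some v) (hsO v hvO) hnp (by simpa using huv) hl
    by_cases h : (none : Option V) ∈ c' (some u)
    · rw [hDpos u h, aux_mem_cOddN_symmDiff]
      have hB : some v ∉ cOddN (insertGraph G S) (c' none) := by
        refine F.p3 none hzO (some v) (hsO v hvO) ?_ (by simp) hl
        intro hp
        exact hnp (F.trans (hprecz u hu h) hp)
      intro hm
      exact hA (hm.mpr hB)
    · rw [hDneg u h]; exact hA
  case p4 =>
    intro u hu hl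
    have h4 := F.p4 (some u) (hsO u hu) hl
    constructor
    · show some u ∉ D u
      by_cases h : (none : Option V) ∈ c' (some u)
      · have hnB : some u ∉ c' none := hselfB u hu h (by rw [hl]; simp)
        rw [hDpos u h]
        intro hm
        rcases Set.mem_symmDiff.mp hm with ⟨ha, -⟩ | ⟨hb, -⟩
        · exact h4.1 ha
        · exact hnB hb
      · rw [hDneg u h]; exact h4.1
    · rw [hodd u u]
      by_cases h : (none : Option V) ∈ c' (some u)
      · have hnOB : some u ∉ oddN (insertGraph G S) (c' none) :=
          hselfOB u hu h (by rw [hl]; simp)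
        rw [hDpos u h, aux_mem_oddN_symmDiff]
        exact iff_of_true h4.2 hnOB
      · rw [hDneg u h]; exact h4.2
  case p5 =>
    intro u hu hl
    have h5 := F.p5 (some u) (hsO u hu) hl
    constructor
    · show some u ∈ D u
      by_cases h : (none : Option V) ∈ c' (some u)
      · have hnB : some u ∉ c' none := hselfB u hu h (by rw [hl]; simp)
        rw [hDpos u h]
        exact Set.mem_symmDiff.mpr (Or.inl ⟨h5.1, hnB⟩)
      · rw [hDneg u h]; exact h5.1
    · rw [hodd u u]
      by_cases h : (none : Option V) ∈ c' (some u)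
      · have hnOB : some u ∉ oddN (insertGraph G S) (c' none) :=
          hselfOB u hu h (by rw [hl]; simp)
        rw [hDpos u h, aux_mem_oddN_symmDiff]
        exact iff_of_true h5.2 hnOB
      · rw [hDneg u h]; exact h5.2
  case p6 =>
    intro u hu hl
    have h6 := F.p6 (some u) (hsO u hu) hl
    constructor
    · show some u ∈ D u
      by_cases h : (none : Option V) ∈ c' (some u)
      · have hnB : some u ∉ c' none := hselfB u hu h (by rw [hl]; simp)
        rw [hDpos u h]
        exact Set.mem_symmDiff.mpr (Or.inl ⟨h6.1, hnB⟩)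
      · rw [hDneg u h]; exact h6.1
    · rw [hodd u u]
      by_cases h : (none : Option V) ∈ c' (some u)
      · have hnOB : some u ∉ oddN (insertGraph G S) (c' none) :=
          hselfOB u hu h (by rw [hl]; simp)
        rw [hDpos u h, aux_mem_oddN_symmDiff]
        intro hm
        exact h6.2 (hm.mpr hnOB)
      · rw [hDneg u h]; exact h6.2
  case p7 =>
    intro u hu hl
    have h7 := F.p7 (some u) (hsO u hu) hl
    rw [hodd u u]
    by_cases h : (none : Option V) ∈ c' (some u)
    · have hnOB : some u ∉ oddN (insertGraph G S) (c' none) :=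
        hselfOB u hu h (by rw [hl]; simp)
      rw [hDpos u h, aux_mem_oddN_symmDiff]
      exact iff_of_true h7 hnOB
    · rw [hDneg u h]; exact h7
  case p8 =>
    intro u hu hl
    have h8 := F.p8 (some u) (hsO u hu) hl
    show some u ∈ D u
    by_cases h : (none : Option V) ∈ c' (some u)
    · have hnB : some u ∉ c' none := hselfB u hu h (by rw [hl]; simp)
      rw [hDpos u h]
      exact Set.mem_symmDiff.mpr (Or.inl ⟨h8, hnB⟩)
    · rw [hDneg u h]; exact h8
  case p9 =>
    intro u hu hl
    have h9 := F.p9 (some u) (hsO u hu) hl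
    rw [hcodd u u]
    by_cases h : (none : Option V) ∈ c' (some u)
    · have hCB : some u ∉ cOddN (insertGraph G S) (c' none) := hselfCB u hu h hl
      rw [hDpos u h, aux_mem_cOddN_symmDiff]
      exact iff_of_true h9 hCB
    · rw [hDneg u h]; exact h9

end
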